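/- arXiv:2004.08437 — 5 statements merged into one kernel-verified Lean document; each statement's English description precedes it below -/
import Mathlib

section
/- Let μ1, μ2, μ3, μ4 be nonzero real numbers. The point θ = (0, π/2, π, 3π/2) is a critical point of V (i.e. all four partial derivatives ∂V/∂θ_k vanish there) if and only if μ1 = μ3 and μ2 = μ4. (In other words, the (1+4)-gon configuration requires equal circulations on opposite corners of the square.) -/
open Real Polynomial

/-- The potential `V` for the (1+4)-vortex problem with circulation
parameters `μ` and angular positions `θ`. -/
noncomputable def V (μ θ : Fin 4 → ℝ) : ℝ :=
  -∑ i : Fin 4, ∑ j ∈ Finset.Ioi i,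
      μ i * μ j *
        (Real.cos (θ i - θ j) + (1 / 2) * Real.log (2 - 2 * Real.cos (θ i - θ j)))

/-- The partial derivative `∂V/∂θ_k` at the point `θ`. -/
noncomputable def partialV (μ θ : Fin 4 → ℝ) (k : Fin 4) : ℝ :=
  deriv (fun t => V μ (Function.update θ k t)) (θ k)

/-- `θ` is a critical point of `V`: all four partial derivatives vanish. -/
def IsCriticalPt (μ θ : Fin 4 → ℝ) : Prop :=
  ∀ k : Fin 4, partialV μ θ k = 0

/-- The Hessian matrix of `V` at `θ`, `H k l = ∂²V/∂θ_k ∂θ_l`. -/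
noncomputable def hessV (μ θ : Fin 4 → ℝ) : Matrix (Fin 4) (Fin 4) ℝ :=
  fun k l => deriv (fun t => partialV μ (Function.update θ k t) l) (θ k)

/-!
The pair potential `F x = cos x + ½ log (2 - 2 cos x)` is even, so `V` is, up to an additive
constant, `-½ ∑_{i,j} μ_i μ_j F (θ_i - θ_j)`, and therefore
`∂V/∂θ_k = -μ_k ∑_j μ_j F' (θ_k - θ_j)` with `F' x = sin x (1 / (2 - 2 cos x) - 1)`.
At the square, `F'` vanishes at multiples of `π` and equals `∓½` at `±π/2`, which gives
`∂V/∂θ_k = μ_k (μ_{k-1} - μ_{k+1}) / 2` (indices mod 4); as the circulations are nonzero,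
these vanish exactly when `μ_1 = μ_3` and `μ_2 = μ_4`.
-/

noncomputable def pairPotential (x : ℝ) : ℝ :=
  Real.cos x + (1 / 2) * Real.log (2 - 2 * Real.cos x)

noncomputable def pairPotentialDeriv (x : ℝ) : ℝ :=
  Real.sin x * (1 / (2 - 2 * Real.cos x) - 1)

lemma pairPotential_neg (x : ℝ) : pairPotential (-x) = pairPotential x := by
  rw [pairPotential, pairPotential, Real.cos_neg]

lemma pairPotentialDeriv_neg (x : ℝ) : pairPotentialDeriv (-x) = -pairPotentialDeriv x := by
  simp only [pairPotentialDeriv, Real.sin_neg, Real.cos_neg, neg_mul]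

lemma pairPotential_zero : pairPotential 0 = 1 := by
  simp [pairPotential]

lemma hasDerivAt_pairPotential {x : ℝ} (hx : Real.cos x ≠ 1) :
    HasDerivAt pairPotential (pairPotentialDeriv x) x := by
  have hne : 2 - 2 * Real.cos x ≠ 0 := fun h => hx (by linarith)
  have hlog := (((Real.hasDerivAt_cos x).const_mul 2).const_sub 2).log hne
  refine ((Real.hasDerivAt_cos x).add (hlog.const_mul (1 / 2))).congr_deriv ?_
  rw [pairPotentialDeriv]
  field_simp
  ring

-- `pairPotential 0 = 1` because `Real.log 0 = 0`, so the diagonal terms only add a constant.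
lemma V_eq_sum_pairPotential (μ θ : Fin 4 → ℝ) :
    V μ θ = -(1 / 2) * ∑ i, ∑ j, μ i * μ j * pairPotential (θ i - θ j)
      + (1 / 2) * ∑ i, μ i ^ 2 := by
  have hswap (i j : Fin 4) : pairPotential (θ j - θ i) = pairPotential (θ i - θ j) := by
    rw [← pairPotential_neg, neg_sub]
  change -∑ i : Fin 4, ∑ j ∈ Finset.Ioi i, μ i * μ j * pairPotential (θ i - θ j) = _
  simp [Fin.sum_univ_four, show Finset.Ioi (0 : Fin 4) = {1, 2, 3} by decide,
    show Finset.Ioi (1 : Fin 4) = {2, 3} by decide, show Finset.Ioi (2 : Fin 4) = {3} by decide,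
    show Finset.Ioi (3 : Fin 4) = ∅ by decide, pairPotential_zero,
    hswap 1 0, hswap 2 0, hswap 3 0, hswap 2 1, hswap 3 1, hswap 3 2]
  ring

section PairSum

variable {ι : Type*} [DecidableEq ι]

lemma hasDerivAt_pairPotential_update (θ : ι → ℝ) {k : ι}
    (hθ : ∀ j ≠ k, Real.cos (θ k - θ j) ≠ 1) (i j : ι) :
    HasDerivAt (fun t => pairPotential (Function.update θ k t i - Function.update θ k t j))
      (pairPotentialDeriv (θ i - θ j) * ((if i = k then 1 else 0) - (if j = k then 1 else 0)))
      (θ k) := by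
  by_cases hi : i = k <;> by_cases hj : j = k
  · subst hi hj
    simpa using hasDerivAt_const _ (pairPotential 0)
  · subst hi
    simpa [hj] using (hasDerivAt_pairPotential (hθ j hj)).comp_sub_const (θ i) (θ j)
  · subst hj
    have hcos : Real.cos (θ i - θ j) ≠ 1 := by rw [← neg_sub, Real.cos_neg]; exact hθ i hi
    simpa [hi] using (hasDerivAt_pairPotential hcos).comp_const_sub (θ i) (θ j)
  · simpa [hi, hj] using hasDerivAt_const (θ k) (pairPotential (θ i - θ j))

lemma hasDerivAt_sum_pairPotential_update [Fintype ι] (μ θ : ι → ℝ) {k : ι}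
    (hθ : ∀ j ≠ k, Real.cos (θ k - θ j) ≠ 1) :
    HasDerivAt
      (fun t => ∑ i, ∑ j,
        μ i * μ j * pairPotential (Function.update θ k t i - Function.update θ k t j))
      (2 * μ k * ∑ j, μ j * pairPotentialDeriv (θ k - θ j)) (θ k) := by
  have h := HasDerivAt.fun_sum (u := Finset.univ) fun i _ =>
    HasDerivAt.fun_sum (u := Finset.univ) fun j _ =>
      (hasDerivAt_pairPotential_update θ hθ i j).const_mul (μ i * μ j)
  refine h.congr_deriv ?_
  have hswap (i : ι) : pairPotentialDeriv (θ i - θ k) = -pairPotentialDeriv (θ k - θ i) := by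
    rw [← pairPotentialDeriv_neg, neg_sub]
  simp only [mul_sub, mul_ite, mul_one, mul_zero, Finset.sum_sub_distrib, Finset.sum_ite_irrel,
    Finset.sum_const_zero, Finset.sum_ite_eq', Finset.mem_univ, if_true, hswap, mul_neg,
    sub_neg_eq_add]
  rw [Finset.sum_add_distrib, Finset.sum_ite_eq', if_pos (Finset.mem_univ k), Finset.mul_sum,
    ← Finset.sum_add_distrib]
  exact Finset.sum_congr rfl fun j _ => by ring

end PairSum

lemma partialV_eq_sum (μ θ : Fin 4 → ℝ) {k : Fin 4} (hθ : ∀ j ≠ k, Real.cos (θ k - θ j) ≠ 1) :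
    partialV μ θ k = -μ k * ∑ j, μ j * pairPotentialDeriv (θ k - θ j) := by
  simp only [partialV, V_eq_sum_pairPotential]
  have h := ((hasDerivAt_sum_pairPotential_update μ θ hθ).const_mul (-(1 / 2))).add_const
    ((1 / 2) * ∑ i, μ i ^ 2)
  rw [h.deriv]
  ring

lemma cos_sub_ne_one_square {k j : Fin 4} (hjk : j ≠ k) :
    Real.cos ((![0, π / 2, π, 3 * π / 2] : Fin 4 → ℝ) k - ![0, π / 2, π, 3 * π / 2] j) ≠ 1 := by
  rw [show (3 * π / 2 : ℝ) = π / 2 + π by ring]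
  fin_cases k <;> fin_cases j <;> simp [Real.cos_sub, Real.cos_add] at hjk ⊢ <;> norm_num

lemma partialV_square (μ1 μ2 μ3 μ4 : ℝ) :
    partialV ![μ1, μ2, μ3, μ4] ![0, π / 2, π, 3 * π / 2] =
      ![μ1 * (μ4 - μ2) / 2, μ2 * (μ1 - μ3) / 2, μ3 * (μ2 - μ4) / 2, μ4 * (μ3 - μ1) / 2] := by
  funext k
  rw [partialV_eq_sum _ _ fun j => cos_sub_ne_one_square,
    show (3 * π / 2 : ℝ) = π / 2 + π by ring]
  fin_cases k <;>
    simp [Fin.sum_univ_four, pairPotentialDeriv, Real.sin_sub, Real.cos_sub, Real.sin_add,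
      Real.cos_add] <;>
    ring

theorem square_critical_iff_general (μ1 μ2 μ3 μ4 : ℝ)
    (h1 : μ1 ≠ 0) (h2 : μ2 ≠ 0) :
    IsCriticalPt ![μ1, μ2, μ3, μ4] ![0, π / 2, π, 3 * π / 2] ↔
      μ1 = μ3 ∧ μ2 = μ4 := by
  rw [IsCriticalPt, partialV_square]
  constructor
  · intro h
    have h42 : μ4 = μ2 := by simpa [h1, sub_eq_zero] using h 0
    have h13 : μ1 = μ3 := by simpa [h2, sub_eq_zero] using h 1
    exact ⟨h13, h42.symm⟩
  · rintro ⟨rfl, rfl⟩ k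
    fin_cases k <;> simp

/-- The (1+4)-gon: `(0, pi/2, pi, 3pi/2)` is a critical point of `V` iff
`mu1 = mu3` and `mu2 = mu4`. -/
theorem square_critical_iff (μ1 μ2 μ3 μ4 : ℝ)
    (h1 : μ1 ≠ 0) (h2 : μ2 ≠ 0) (h3 : μ3 ≠ 0) (h4 : μ4 ≠ 0) :
    IsCriticalPt ![μ1, μ2, μ3, μ4] ![0, π / 2, π, 3 * π / 2] ↔
      μ1 = μ3 ∧ μ2 = μ4 :=
  square_critical_iff_general μ1 μ2 μ3 μ4 h1 h2
end

section
/- Let μ1, μ2, μ3, μ4 be nonzero real numbers. The point (0, 2π/3, π, −2π/3) is a critical point of V if and only if μ1 = μ2 = μ4 (with μ3 arbitrary nonzero). -/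
open Real Polynomial

/-! Away from collisions `∂V/∂θₖ = -∑_{j ≠ k} μₖ μⱼ g'(θₖ - θⱼ)` with
`g'(x) = -sin x + sin x / (2 - 2 cos x)`, which is odd, `2π`-periodic, vanishes at `π/3` and `π`
and equals `-√3/3` at `2π/3`. At the kite every pairwise angle is `±π/3`, `±2π/3` or `π`
modulo `2π`, so `∂V/∂θ₃ = 0` and the other three partials are `√3/3 · μ₁ (μ₄ - μ₂)`,
`√3/3 · μ₂ (μ₁ - μ₄)` and `√3/3 · μ₄ (μ₂ - μ₁)`. -/

open Finset

local notation "kite" => (![0, 2 * π / 3, π, -(2 * π / 3)] : Fin 4 → ℝ)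

lemma sum_Ioi_mul_single_sub_single {ι : Type*} [Fintype ι] [LinearOrder ι]
    [LocallyFiniteOrderTop ι] [LocallyFiniteOrderBot ι] (a : ι → ι → ℝ) (k : ι) :
    ∑ i, ∑ j ∈ Ioi i, a i j * ((Pi.single k 1 : ι → ℝ) i - (Pi.single k 1 : ι → ℝ) j) =
      ∑ j ∈ Ioi k, a k j - ∑ i ∈ Iio k, a i k := by
  simp only [mul_sub, sum_sub_distrib]
  congr 1
  · simp [Pi.single_apply]
  · rw [sum_comm' (t' := univ) (s' := Iio) (by simp)]
    simp [Pi.single_apply]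

noncomputable def pairEnergy (x : ℝ) : ℝ := cos x + 1 / 2 * log (2 - 2 * cos x)

noncomputable def pairEnergyDeriv (x : ℝ) : ℝ := -sin x + sin x / (2 - 2 * cos x)

lemma hasDerivAt_pairEnergy {x : ℝ} (hx : cos x ≠ 1) :
    HasDerivAt pairEnergy (pairEnergyDeriv x) x := by
  have hpos : 2 - 2 * cos x ≠ 0 := by
    contrapose! hx
    linarith
  refine HasDerivAt.congr_deriv (f := pairEnergy) ((hasDerivAt_cos x).fun_add
    ((((hasDerivAt_cos x).const_mul 2).const_sub 2).log hpos |>.const_mul (1 / 2))) ?_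
  rw [pairEnergyDeriv]
  field_simp

lemma pairEnergyDeriv_neg (x : ℝ) : pairEnergyDeriv (-x) = -pairEnergyDeriv x := by
  simp only [pairEnergyDeriv, sin_neg, cos_neg]
  ring

lemma pairEnergyDeriv_add_two_pi (x : ℝ) :
    pairEnergyDeriv (x + 2 * π) = pairEnergyDeriv x := by
  simp only [pairEnergyDeriv, sin_add_two_pi, cos_add_two_pi]

lemma pairEnergyDeriv_pi : pairEnergyDeriv π = 0 := by
  simp [pairEnergyDeriv]

lemma pairEnergyDeriv_pi_div_three : pairEnergyDeriv (π / 3) = 0 := by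
  norm_num [pairEnergyDeriv, cos_pi_div_three]

lemma pairEnergyDeriv_two_pi_div_three : pairEnergyDeriv (2 * π / 3) = -(√3 / 3) := by
  rw [show 2 * π / 3 = π - π / 3 by ring, pairEnergyDeriv, sin_pi_sub, cos_pi_sub,
    cos_pi_div_three, sin_pi_div_three]
  ring

section partialDerivative

variable (μ θ : Fin 4 → ℝ) (k : Fin 4)

lemma hasDerivAt_V_update (hθ : ∀ i j, i < j → cos (θ i - θ j) ≠ 1) :
    HasDerivAt (fun t => V μ (Function.update θ k t))
      (-(∑ j ∈ Ioi k, μ k * μ j * pairEnergyDeriv (θ k - θ j)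
        - ∑ i ∈ Iio k, μ i * μ k * pairEnergyDeriv (θ i - θ k))) (θ k) := by
  have hupd : ∀ i, HasDerivAt (fun t => Function.update θ k t i)
      ((Pi.single k 1 : Fin 4 → ℝ) i) (θ k) :=
    hasDerivAt_pi.1 (hasDerivAt_update θ k (θ k))
  have hterm : ∀ i, ∀ j ∈ Ioi i, HasDerivAt
      (fun t => μ i * μ j * pairEnergy (Function.update θ k t i - Function.update θ k t j))
      (μ i * μ j * pairEnergyDeriv (θ i - θ j) *
        ((Pi.single k 1 : Fin 4 → ℝ) i - (Pi.single k 1 : Fin 4 → ℝ) j)) (θ k) := by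
    intro i j hj
    have := (hasDerivAt_pairEnergy (hθ i j (mem_Ioi.1 hj))).comp_of_eq (θ k)
      ((hupd i).fun_sub (hupd j)) (by simp)
    simpa [mul_assoc] using this.const_mul (μ i * μ j)
  have := (HasDerivAt.fun_sum (u := univ) fun i _ => HasDerivAt.fun_sum (hterm i)).neg
  rwa [sum_Ioi_mul_single_sub_single fun i j => μ i * μ j * pairEnergyDeriv (θ i - θ j)] at this

lemma partialV_eq (hθ : ∀ i j, i < j → cos (θ i - θ j) ≠ 1) :
    partialV μ θ k = -(∑ j ∈ Ioi k, μ k * μ j * pairEnergyDeriv (θ k - θ j)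
        - ∑ i ∈ Iio k, μ i * μ k * pairEnergyDeriv (θ i - θ k)) :=
  (hasDerivAt_V_update μ θ k hθ).deriv

end partialDerivative

lemma kite_cos_sub_ne_one : ∀ i j, i < j → cos (kite i - kite j) ≠ 1 := by
  intro i j hij hcos
  have := pi_pos
  refine absurd ((cos_eq_one_iff_of_lt_of_lt ?_ ?_).1 hcos) ?_ <;>
    fin_cases i <;> fin_cases j <;> simp at hij ⊢ <;> linarith

lemma partialV_kite (μ : Fin 4 → ℝ) :
    partialV μ kite = ![√3 / 3 * μ 0 * (μ 3 - μ 1), √3 / 3 * μ 1 * (μ 0 - μ 3), 0,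
      √3 / 3 * μ 3 * (μ 1 - μ 0)] := by
  have h12 : pairEnergyDeriv (2 * π / 3 - π) = 0 := by
    rw [show 2 * π / 3 - π = -(π / 3) by ring, pairEnergyDeriv_neg,
      pairEnergyDeriv_pi_div_three, neg_zero]
  have h13 : pairEnergyDeriv (2 * π / 3 + 2 * π / 3) = √3 / 3 := by
    rw [show 2 * π / 3 + 2 * π / 3 = -(2 * π / 3) + 2 * π by ring, pairEnergyDeriv_add_two_pi,
      pairEnergyDeriv_neg, pairEnergyDeriv_two_pi_div_three, neg_neg]
  have h23 : pairEnergyDeriv (π + 2 * π / 3) = 0 := by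
    rw [show π + 2 * π / 3 = -(π / 3) + 2 * π by ring, pairEnergyDeriv_add_two_pi,
      pairEnergyDeriv_neg, pairEnergyDeriv_pi_div_three, neg_zero]
  funext k
  rw [partialV_eq _ _ _ kite_cos_sub_ne_one]
  fin_cases k <;>
    simp [← filter_lt_eq_Ioi, ← filter_gt_eq_Iio, sum_filter, Fin.sum_univ_four, h12, h13, h23,
      pairEnergyDeriv_neg, pairEnergyDeriv_pi, pairEnergyDeriv_two_pi_div_three] <;>
    ring

theorem kite_two_pi_thirds_critical_iff_general (μ1 μ2 μ3 μ4 : ℝ)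
    (h1 : μ1 ≠ 0) (h2 : μ2 ≠ 0) :
    IsCriticalPt ![μ1, μ2, μ3, μ4] ![0, 2 * π / 3, π, -(2 * π / 3)] ↔
      μ1 = μ2 ∧ μ2 = μ4 := by
  have hc : √3 / 3 ≠ 0 := by positivity
  constructor
  · intro hcrit
    have h42 : μ4 = μ2 := by simpa [partialV_kite, hc, h1, sub_eq_zero] using hcrit 0
    have h14 : μ1 = μ4 := by simpa [partialV_kite, hc, h2, sub_eq_zero] using hcrit 1
    exact ⟨h14.trans h42, h42.symm⟩
  · rintro ⟨rfl, rfl⟩ k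
    fin_cases k <;> simp [partialV_kite]

/-- The kite at `theta2 = 2pi/3` is a critical point of `V` iff
`mu1 = mu2 = mu4`. -/
theorem kite_two_pi_thirds_critical_iff (μ1 μ2 μ3 μ4 : ℝ)
    (h1 : μ1 ≠ 0) (h2 : μ2 ≠ 0) (h3 : μ3 ≠ 0) (h4 : μ4 ≠ 0) :
    IsCriticalPt ![μ1, μ2, μ3, μ4] ![0, 2 * π / 3, π, -(2 * π / 3)] ↔
      μ1 = μ2 ∧ μ2 = μ4 :=
  kite_two_pi_thirds_critical_iff_general μ1 μ2 μ3 μ4 h1 h2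
end

section
/- Let μ1, μ3 be real numbers with μ3 > 0 and ((12√70 − 141)/121)·μ3 ≤ μ1 < −μ3/3. Then (−μ1 + 3μ3)/2 > 0, the discriminant 121μ1² + 282μ1μ3 + 81μ3² is nonnegative, and 7μ1 + 3μ3 > √(121μ1² + 282μ1μ3 + 81μ3²); consequently both numbers (7μ1 + 3μ3 ± √(121μ1² + 282μ1μ3 + 81μ3²))/8 are positive. (These are the three nonzero eigenvalues of the weighted Hessian at the kite with θ2 = 2π/3 and μ1 = μ2 = μ4, so such kites are linearly stable for circulations in this range.) -/
/-! The discriminant `121 μ1² + 282 μ1 μ3 + 81 μ3²` has roots `μ1 = (-141 ± 12√70) μ3 / 121`, so the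
lower bound on `μ1` is exactly the condition that it be nonnegative. The gap between the square of
`7 μ1 + 3 μ3` and the discriminant factors as `-24 (3 μ1 + μ3)(μ1 + 3 μ3)`, which is positive for
`-3 μ3 < μ1 < -μ3 / 3`; hence the square root lies strictly below `7 μ1 + 3 μ3`. -/

open Real

namespace Kite

variable {μ1 μ3 : ℝ}

lemma disc_mul_eq (μ1 μ3 : ℝ) :
    121 * (121 * μ1 ^ 2 + 282 * μ1 * μ3 + 81 * μ3 ^ 2) =
      (121 * μ1 + (141 - 12 * √70) * μ3) * (121 * μ1 + (141 + 12 * √70) * μ3) := by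
  have h70 : √70 ^ 2 = 70 := sq_sqrt (by norm_num)
  linear_combination 144 * μ3 ^ 2 * h70

lemma sq_sub_disc_eq (μ1 μ3 : ℝ) :
    (7 * μ1 + 3 * μ3) ^ 2 - (121 * μ1 ^ 2 + 282 * μ1 * μ3 + 81 * μ3 ^ 2) =
      -24 * (3 * μ1 + μ3) * (μ1 + 3 * μ3) := by
  ring

lemma eight_lt_sqrt_seventy : 8 < √70 :=
  lt_sqrt_of_sq_lt (by norm_num)

lemma neg_forty_five_mul_lt (hμ3 : 0 < μ3) (hlow : ((12 * √70 - 141) / 121) * μ3 ≤ μ1) :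
    -45 * μ3 < 121 * μ1 := by
  have h := mul_lt_mul_of_pos_right eight_lt_sqrt_seventy hμ3
  linarith

lemma disc_nonneg (hμ3 : 0 ≤ μ3) (hlow : ((12 * √70 - 141) / 121) * μ3 ≤ μ1) :
    0 ≤ 121 * μ1 ^ 2 + 282 * μ1 * μ3 + 81 * μ3 ^ 2 := by
  have hA : 0 ≤ 121 * μ1 + (141 - 12 * √70) * μ3 := by linarith
  have hB : 0 ≤ 121 * μ1 + (141 + 12 * √70) * μ3 := by
    linarith [mul_nonneg (sqrt_nonneg 70) hμ3]
  have h := disc_mul_eq μ1 μ3 ▸ mul_nonneg hA hB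
  linarith

lemma sqrt_disc_lt (hμ3 : 0 < μ3) (hlow : ((12 * √70 - 141) / 121) * μ3 ≤ μ1)
    (hhigh : μ1 < -μ3 / 3) :
    √(121 * μ1 ^ 2 + 282 * μ1 * μ3 + 81 * μ3 ^ 2) < 7 * μ1 + 3 * μ3 := by
  have hμ1 := neg_forty_five_mul_lt hμ3 hlow
  have hpos : 0 < 7 * μ1 + 3 * μ3 := by linarith
  have hgap : 0 < -24 * (3 * μ1 + μ3) * (μ1 + 3 * μ3) := by
    have : 0 < -(3 * μ1 + μ3) * (μ1 + 3 * μ3) := mul_pos (by linarith) (by linarith)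
    linarith
  rw [sqrt_lt' hpos]
  linarith [sq_sub_disc_eq μ1 μ3]

end Kite

/-- For `mu3 > 0` and `((12*sqrt 70 - 141)/121)*mu3 <= mu1 < -mu3/3`, the
three nonzero eigenvalues of the weighted Hessian at the kite are positive. -/
theorem kite_stability_range (μ1 μ3 : ℝ) (hμ3 : 0 < μ3)
    (hlow : ((12 * Real.sqrt 70 - 141) / 121) * μ3 ≤ μ1)
    (hhigh : μ1 < -μ3 / 3) :
    (-μ1 + 3 * μ3) / 2 > 0 ∧
    0 ≤ 121 * μ1 ^ 2 + 282 * μ1 * μ3 + 81 * μ3 ^ 2 ∧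
    7 * μ1 + 3 * μ3 > Real.sqrt (121 * μ1 ^ 2 + 282 * μ1 * μ3 + 81 * μ3 ^ 2) ∧
    (7 * μ1 + 3 * μ3 + Real.sqrt (121 * μ1 ^ 2 + 282 * μ1 * μ3 + 81 * μ3 ^ 2)) / 8 > 0 ∧
    (7 * μ1 + 3 * μ3 - Real.sqrt (121 * μ1 ^ 2 + 282 * μ1 * μ3 + 81 * μ3 ^ 2)) / 8 > 0 := by
  have hlt := Kite.sqrt_disc_lt hμ3 hlow hhigh
  have hsqrt := sqrt_nonneg (121 * μ1 ^ 2 + 282 * μ1 * μ3 + 81 * μ3 ^ 2)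
  exact ⟨by linarith, Kite.disc_nonneg hμ3.le hlow, hlt, by linarith, by linarith⟩
end

section
/- The real polynomial 17x⁵ − 98x⁴ + 117x³ − 54x² + 22x − 8 has exactly three real roots, and every real root is positive. -/
/-!
The derivative `85x⁴ - 392x³ + 351x² - 108x + 22` is positive on `(-∞, 7/10]` and on `[4, ∞)` and
negative on `[4/5, 3]`, while the quintic itself is positive on `[7/10, 4/5]` and negative on
`[3, 4]`. So every real root lies in one of the three intervals of strict monotonicity, each of
which contains exactly one root by the intermediate value theorem. For `x ≤ 0` every term of the
quintic is nonpositive and the constant term is `-8`, so no root is nonpositive.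
-/

open Polynomial Set

namespace Polynomial

variable {p : ℝ[X]} {D : Set ℝ}

theorem strictMonoOn_eval_of_derivative_pos (hD : Convex ℝ D)
    (h : ∀ x ∈ D, 0 < p.derivative.eval x) : StrictMonoOn p.eval D :=
  strictMonoOn_of_deriv_pos hD p.continuous.continuousOn fun x hx => by
    rw [Polynomial.deriv]
    exact h x (interior_subset hx)

theorem strictAntiOn_eval_of_derivative_neg (hD : Convex ℝ D)
    (h : ∀ x ∈ D, p.derivative.eval x < 0) : StrictAntiOn p.eval D :=
  strictAntiOn_of_deriv_neg hD p.continuous.continuousOn fun x hx => by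
    rw [Polynomial.deriv]
    exact h x (interior_subset hx)

theorem exists_isRoot_mem_Ioo {a b : ℝ} (hab : a ≤ b)
    (hsign : p.eval a < 0 ∧ 0 < p.eval b ∨ 0 < p.eval a ∧ p.eval b < 0) :
    ∃ x ∈ Ioo a b, p.IsRoot x := by
  have hcont := p.continuous.continuousOn (s := Icc a b)
  rcases hsign with h | h
  · exact intermediate_value_Ioo hab hcont h
  · exact intermediate_value_Ioo' hab hcont h.symm

end Polynomial

noncomputable def quintic : ℝ[X] :=
  C 17 * X ^ 5 - C 98 * X ^ 4 + C 117 * X ^ 3 - C 54 * X ^ 2 + C 22 * X - C 8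

theorem eval_quintic (x : ℝ) :
    quintic.eval x = 17 * x ^ 5 - 98 * x ^ 4 + 117 * x ^ 3 - 54 * x ^ 2 + 22 * x - 8 := by
  simp [quintic]

theorem eval_derivative_quintic (x : ℝ) :
    quintic.derivative.eval x = 85 * x ^ 4 - 392 * x ^ 3 + 351 * x ^ 2 - 108 * x + 22 := by
  simp only [quintic, derivative_sub, derivative_add, derivative_C_mul_X_pow, derivative_C_mul_X,
    derivative_C, eval_sub, eval_add, eval_C, eval_mul, eval_pow, eval_X, eval_zero]
  ring

theorem quintic_ne_zero : quintic ≠ 0 := fun h => by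
  simpa [h] using eval_quintic 0

theorem eval_quintic_neg_of_nonpos {x : ℝ} (hx : x ≤ 0) : quintic.eval x < 0 := by
  rw [eval_quintic]
  nlinarith [pow_two_nonneg x, pow_two_nonneg (x ^ 2), mul_nonneg (neg_nonneg.2 hx) (sq_nonneg x),
    mul_nonneg (neg_nonneg.2 hx) (sq_nonneg (x ^ 2))]

theorem eval_quintic_pos_of_mem_Icc {x : ℝ} (hx : x ∈ Icc (7 / 10) (4 / 5)) :
    0 < quintic.eval x := by
  obtain ⟨h₁, h₂⟩ := hx
  have h := mul_nonneg (sub_nonneg.2 h₁) (sub_nonneg.2 h₂)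
  rw [eval_quintic]
  nlinarith [mul_nonneg h (sub_nonneg.2 h₁), mul_nonneg h (sub_nonneg.2 h₂),
    mul_nonneg h (sq_nonneg (x - 3 / 4))]

theorem eval_quintic_neg_of_mem_Icc {x : ℝ} (hx : x ∈ Icc 3 4) : quintic.eval x < 0 := by
  obtain ⟨h₁, h₂⟩ := hx
  have h := mul_nonneg (sub_nonneg.2 h₁) (sub_nonneg.2 h₂)
  rw [eval_quintic]
  nlinarith [mul_nonneg h (sub_nonneg.2 h₁), mul_nonneg h (sub_nonneg.2 h₂),
    mul_nonneg h (sq_nonneg (x - 7 / 2))]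

theorem strictMonoOn_quintic_Iic : StrictMonoOn quintic.eval (Iic (7 / 10)) :=
  strictMonoOn_eval_of_derivative_pos (convex_Iic _) fun x (hx : x ≤ 7 / 10) => by
    rw [eval_derivative_quintic]
    nlinarith [sq_nonneg (x ^ 2 - 2 * x), sq_nonneg (x - 7 / 10),
      mul_nonneg (sub_nonneg.2 hx) (sq_nonneg x), mul_nonneg (sub_nonneg.2 hx) (sq_nonneg (x - 1))]

theorem strictAntiOn_quintic_Icc : StrictAntiOn quintic.eval (Icc (4 / 5) 3) :=
  strictAntiOn_eval_of_derivative_neg (convex_Icc _ _) fun x ⟨h₁, h₂⟩ => by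
    have h := mul_nonneg (sub_nonneg.2 h₁) (sub_nonneg.2 h₂)
    rw [eval_derivative_quintic]
    nlinarith [mul_nonneg h (sub_nonneg.2 h₁), mul_nonneg h (sub_nonneg.2 h₂),
      mul_nonneg h (sq_nonneg (x - 2))]

theorem strictMonoOn_quintic_Ici : StrictMonoOn quintic.eval (Ici 4) :=
  strictMonoOn_eval_of_derivative_pos (convex_Ici _) fun x (hx : 4 ≤ x) => by
    rw [eval_derivative_quintic]
    nlinarith [mul_nonneg (sub_nonneg.2 hx) (sq_nonneg (x - 4)), sq_nonneg (x - 4),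
      mul_nonneg (mul_nonneg (sub_nonneg.2 hx) (sub_nonneg.2 hx)) (sub_nonneg.2 hx)]

theorem mem_Iic_or_Icc_or_Ici_of_isRoot_quintic {x : ℝ} (hx : quintic.IsRoot x) :
    x ∈ Iic (7 / 10) ∨ x ∈ Icc (4 / 5) 3 ∨ x ∈ Ici 4 := by
  have h₁ : x ∉ Icc (7 / 10) (4 / 5) := fun h => (eval_quintic_pos_of_mem_Icc h).ne' hx
  have h₂ : x ∉ Icc 3 4 := fun h => (eval_quintic_neg_of_mem_Icc h).ne hx
  simp only [mem_Icc, mem_Iic, mem_Ici, not_and, not_le] at h₁ h₂ ⊢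
  rcases le_or_gt x (7 / 10) with h | h
  · exact .inl h
  rcases le_or_gt x 3 with h' | h'
  · exact .inr <| .inl ⟨(h₁ h.le).le, h'⟩
  · exact .inr <| .inr (h₂ h'.le).le

theorem exists_roots_toFinset_quintic_eq :
    ∃ b₁ ∈ Ioo 0 (7 / 10), ∃ b₂ ∈ Ioo (4 / 5) 1, ∃ b₃ ∈ Ioo 4 5,
      quintic.roots.toFinset = {b₁, b₂, b₃} := by
  obtain ⟨b₁, hb₁, hr₁⟩ := exists_isRoot_mem_Ioo (p := quintic) (a := 0) (b := 7 / 10)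
    (by norm_num)
    (.inl ⟨eval_quintic_neg_of_nonpos le_rfl, eval_quintic_pos_of_mem_Icc (by norm_num)⟩)
  obtain ⟨b₂, hb₂, hr₂⟩ := exists_isRoot_mem_Ioo (p := quintic) (a := 4 / 5) (b := 1)
    (by norm_num) (.inr ⟨eval_quintic_pos_of_mem_Icc (by norm_num), by norm_num [eval_quintic]⟩)
  obtain ⟨b₃, hb₃, hr₃⟩ := exists_isRoot_mem_Ioo (p := quintic) (a := 4) (b := 5)
    (by norm_num) (.inl ⟨eval_quintic_neg_of_mem_Icc (by norm_num), by norm_num [eval_quintic]⟩)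
  refine ⟨b₁, hb₁, b₂, hb₂, b₃, hb₃, Finset.ext fun x => ?_⟩
  simp only [Multiset.mem_toFinset, mem_roots quintic_ne_zero, Finset.mem_insert,
    Finset.mem_singleton]
  refine ⟨fun hx => ?_, by rintro (rfl | rfl | rfl) <;> assumption⟩
  have hx₀ : quintic.eval x = 0 := hx
  rcases mem_Iic_or_Icc_or_Ici_of_isRoot_quintic hx with h | h | h
  · exact .inl <| strictMonoOn_quintic_Iic.injOn h hb₁.2.le (hx₀.trans hr₁.symm)
  · exact .inr <| .inl <| strictAntiOn_quintic_Icc.injOn h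
      ⟨hb₂.1.le, by linarith [hb₂.2]⟩ (hx₀.trans hr₂.symm)
  · exact .inr <| .inr <| strictMonoOn_quintic_Ici.injOn h hb₃.1.le (hx₀.trans hr₃.symm)

/-- The quintic `17x^5 - 98x^4 + 117x^3 - 54x^2 + 22x - 8` has exactly three
real roots, all positive. -/
theorem quintic_three_positive_roots :
    (C (17 : ℝ) * X ^ 5 - C 98 * X ^ 4 + C 117 * X ^ 3 - C 54 * X ^ 2 +
        C 22 * X - C 8).roots.toFinset.card = 3 ∧
    ∀ x : ℝ, (C (17 : ℝ) * X ^ 5 - C 98 * X ^ 4 + C 117 * X ^ 3 - C 54 * X ^ 2 +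
        C 22 * X - C 8).IsRoot x → 0 < x := by
  show quintic.roots.toFinset.card = 3 ∧ ∀ x, quintic.IsRoot x → 0 < x
  refine ⟨?_, fun x hx => lt_of_not_ge fun h => (eval_quintic_neg_of_nonpos h).ne hx⟩
  obtain ⟨b₁, hb₁, b₂, hb₂, b₃, hb₃, hroots⟩ := exists_roots_toFinset_quintic_eq
  rw [hroots]
  exact Finset.card_eq_three.2 ⟨b₁, b₂, b₃, by linarith [hb₁.2, hb₂.1],
    by linarith [hb₁.2, hb₃.1], by linarith [hb₂.2, hb₃.1], rfl⟩
end

section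
/- The real polynomial g(r) = 13r¹⁰ − 117r⁸ + 146r⁶ − 202r⁴ + 33r² − 1 has exactly six real roots, and its set of real roots is invariant under r ↦ −r (so the real roots come in three pairs ±r). Equivalently, the polynomial 13s⁵ − 117s⁴ + 146s³ − 202s² + 33s − 1 has exactly three real roots, all positive. -/
/-!
Writing `g(r) = q(r²)` with `q(s) = 13s⁵ − 117s⁴ + 146s³ − 202s² + 33s − 1`, everything reduces
to the quintic `q`. All coefficients of `q(−s)` are negative, so the roots of `q` are positive,
and each of them yields exactly the two roots `±√s` of `g`. Sign changes of `q` at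
`0, 1/20, 3/20, 8` give three roots; conversely `q''` is negative on `(−∞, 18/5]` and increasing
on `[18/5, ∞)`, so it has at most one root, and two applications of Rolle's theorem leave at
most three roots for `q`.
-/

open Real Polynomial Set
open scoped Pointwise

namespace Polynomial

theorem card_roots_toFinset_le_iterate_derivative (p : ℝ[X]) (k : ℕ) :
    p.roots.toFinset.card ≤ (derivative^[k] p).roots.toFinset.card + k := by
  induction k with
  | zero => simp
  | succ k ih =>
    rw [Function.iterate_succ_apply']
    have := (derivative^[k] p).card_roots_toFinset_le_derivative
    omega

theorem card_roots_toFinset_le_one_of_strictMonoOn {p : ℝ[X]} {s : Set ℝ}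
    (hroots : ∀ x, p.IsRoot x → x ∈ s) (hmono : StrictMonoOn (fun x => p.eval x) s) :
    p.roots.toFinset.card ≤ 1 := by
  refine Finset.card_le_one.2 fun a ha b hb => ?_
  rw [Multiset.mem_toFinset, mem_roots'] at ha hb
  exact hmono.injOn (hroots a ha.2) (hroots b hb.2) (ha.2.trans hb.2.symm)

theorem exists_isRoot_mem_Ioo_of_mul_neg {p : ℝ[X]} {a b : ℝ} (hab : a ≤ b)
    (h : p.eval a * p.eval b < 0) : ∃ x ∈ Ioo a b, p.IsRoot x := by
  rcases mul_neg_iff.1 h with ⟨ha, hb⟩ | ⟨ha, hb⟩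
  · exact intermediate_value_Ioo' hab p.continuousOn ⟨hb, ha⟩
  · exact intermediate_value_Ioo hab p.continuousOn ⟨ha, hb⟩

theorem isRoot_comp_X_sq_neg_iff (p : ℝ[X]) (x : ℝ) :
    (p.comp (X ^ 2)).IsRoot (-x) ↔ (p.comp (X ^ 2)).IsRoot x := by
  simp only [IsRoot, eval_comp, eval_pow, eval_X, neg_sq]

theorem card_roots_toFinset_comp_X_sq {p : ℝ[X]} (hp : p ≠ 0)
    (hpos : ∀ s, p.IsRoot s → 0 < s) :
    (p.comp (X ^ 2)).roots.toFinset.card = 2 * p.roots.toFinset.card := by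
  set S := p.roots.toFinset
  have hS : ∀ s ∈ S, 0 < s := fun s hs =>
    hpos s ((mem_roots hp).1 (Multiset.mem_toFinset.1 hs))
  have hcomp : p.comp (X ^ 2) ≠ 0 := by
    rw [Ne, comp_eq_zero_iff]
    rintro (h | ⟨-, h⟩)
    · exact hp h
    · simpa using congrArg natDegree h
  have hroots : (p.comp (X ^ 2)).roots.toFinset = S.image sqrt ∪ -S.image sqrt := by
    ext x
    simp only [Multiset.mem_toFinset, mem_roots hcomp, IsRoot, eval_comp, eval_pow, eval_X,
      Finset.mem_union, Finset.mem_neg', Finset.mem_image, S, mem_roots hp]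
    constructor
    · intro hx
      rcases abs_choice x with h | h
      · exact Or.inl ⟨x ^ 2, hx, by rw [sqrt_sq_eq_abs, h]⟩
      · exact Or.inr ⟨x ^ 2, hx, by rw [sqrt_sq_eq_abs, h]⟩
    · have hsq : ∀ s, p.IsRoot s → sqrt s ^ 2 = s := fun s hs => sq_sqrt (hpos s hs).le
      rintro (⟨s, hs, rfl⟩ | ⟨s, hs, hx⟩)
      · rwa [hsq s hs]
      · rwa [← neg_neg x, ← hx, neg_sq, hsq s hs]
  have hinj : InjOn sqrt S := fun a ha b hb h =>
    (sqrt_inj (hS a ha).le (hS b hb).le).1 h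
  have hdisj : Disjoint (S.image sqrt) (-S.image sqrt) := by
    rw [Finset.disjoint_left]
    intro x hx hnx
    obtain ⟨a, ha, rfl⟩ := Finset.mem_image.1 hx
    obtain ⟨b, hb, hab⟩ := Finset.mem_image.1 (Finset.mem_neg'.1 hnx)
    linarith [sqrt_pos.2 (hS a ha), sqrt_pos.2 (hS b hb)]
  rw [hroots, Finset.card_union_of_disjoint hdisj, Finset.card_neg,
    Finset.card_image_of_injOn hinj, two_mul]

end Polynomial

noncomputable def vortexQuintic : ℝ[X] :=
  C (13 : ℝ) * X ^ 5 - C 117 * X ^ 4 + C 146 * X ^ 3 - C 202 * X ^ 2 + C 33 * X - C 1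

theorem eval_vortexQuintic (x : ℝ) :
    vortexQuintic.eval x = 13 * x ^ 5 - 117 * x ^ 4 + 146 * x ^ 3 - 202 * x ^ 2 + 33 * x - 1 := by
  simp [vortexQuintic]

theorem eval_iterate_derivative_two_vortexQuintic (x : ℝ) :
    (derivative^[2] vortexQuintic).eval x = 260 * x ^ 3 - 1404 * x ^ 2 + 876 * x - 404 := by
  simp only [vortexQuintic, Function.iterate_succ_apply', Function.iterate_zero_apply,
    derivative_sub, derivative_add, derivative_C_mul_X_pow, derivative_C_mul_X, derivative_C,
    eval_sub, eval_add, eval_mul, eval_C, eval_pow, eval_X]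
  norm_num

theorem eval_iterate_derivative_three_vortexQuintic (x : ℝ) :
    (derivative^[3] vortexQuintic).eval x = 780 * x ^ 2 - 2808 * x + 876 := by
  simp only [vortexQuintic, Function.iterate_succ_apply', Function.iterate_zero_apply,
    derivative_sub, derivative_add, derivative_C_mul_X_pow, derivative_C_mul_X, derivative_C,
    eval_sub, eval_add, eval_mul, eval_C, eval_pow, eval_X]
  norm_num

theorem vortexQuintic_ne_zero : vortexQuintic ≠ 0 := fun h => by
  simpa [eval_vortexQuintic] using congrArg (eval 0) h

theorem pos_of_isRoot_vortexQuintic {x : ℝ} (hx : vortexQuintic.IsRoot x) : 0 < x := by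
  rw [IsRoot, eval_vortexQuintic] at hx
  by_contra! h
  nlinarith [pow_two_nonneg x, pow_two_nonneg (x ^ 2),
    mul_nonpos_of_nonpos_of_nonneg h (pow_two_nonneg x),
    mul_nonpos_of_nonpos_of_nonneg h (pow_two_nonneg (x ^ 2))]

theorem mem_Ici_of_isRoot_iterate_derivative_two_vortexQuintic {x : ℝ}
    (hx : (derivative^[2] vortexQuintic).IsRoot x) : x ∈ Ici (18 / 5) := by
  rw [IsRoot, eval_iterate_derivative_two_vortexQuintic] at hx
  rw [mem_Ici]
  by_contra! h
  nlinarith [sq_nonneg (x - 69 / 200), mul_nonneg (sub_nonneg.2 h.le) (sq_nonneg (x - 69 / 200)),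
    sq_nonneg x, mul_nonneg (sub_nonneg.2 h.le) (sq_nonneg x)]

theorem strictMonoOn_eval_iterate_derivative_two_vortexQuintic :
    StrictMonoOn (fun x => (derivative^[2] vortexQuintic).eval x) (Ici (18 / 5)) := by
  refine strictMonoOn_of_deriv_pos (convex_Ici _) (Polynomial.continuousOn _) fun x hx => ?_
  rw [interior_Ici, mem_Ioi] at hx
  rw [Polynomial.deriv, ← Function.iterate_succ_apply' derivative,
    eval_iterate_derivative_three_vortexQuintic]
  -- `780 x² − 2808 x = 780 x (x − 18/5)`
  nlinarith [mul_pos (by linarith : (0 : ℝ) < x) (sub_pos.2 hx)]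

theorem card_roots_vortexQuintic_le : vortexQuintic.roots.toFinset.card ≤ 3 := by
  have := vortexQuintic.card_roots_toFinset_le_iterate_derivative 2
  have := card_roots_toFinset_le_one_of_strictMonoOn
    (fun _ => mem_Ici_of_isRoot_iterate_derivative_two_vortexQuintic)
    strictMonoOn_eval_iterate_derivative_two_vortexQuintic
  omega

theorem three_le_card_roots_vortexQuintic : 3 ≤ vortexQuintic.roots.toFinset.card := by
  have root_between : ∀ a b : ℝ, a ≤ b → vortexQuintic.eval a * vortexQuintic.eval b < 0 →
      ∃ x ∈ Ioo a b, x ∈ vortexQuintic.roots.toFinset := fun a b hab h => by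
    obtain ⟨x, hx, hroot⟩ := exists_isRoot_mem_Ioo_of_mul_neg hab h
    exact ⟨x, hx, Multiset.mem_toFinset.2 ((mem_roots vortexQuintic_ne_zero).2 hroot)⟩
  obtain ⟨x, hx, hxS⟩ := root_between 0 (1 / 20) (by norm_num)
    (by norm_num [eval_vortexQuintic])
  obtain ⟨y, hy, hyS⟩ := root_between (1 / 20) (3 / 20) (by norm_num)
    (by norm_num [eval_vortexQuintic])
  obtain ⟨z, hz, hzS⟩ := root_between (3 / 20) 8 (by norm_num)
    (by norm_num [eval_vortexQuintic])
  have hxy : x < y := hx.2.trans hy.1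
  have hyz : y < z := hy.2.trans hz.1
  calc 3 = ({x, y, z} : Finset ℝ).card :=
        (Finset.card_eq_three.2 ⟨x, y, z, hxy.ne, (hxy.trans hyz).ne, hyz.ne, rfl⟩).symm
    _ ≤ _ := Finset.card_le_card (by simp [Finset.insert_subset_iff, hxS, hyS, hzS])

/-- The even degree-10 polynomial `g` has exactly six real roots, with root
set symmetric under negation; equivalently the degree-5 polynomial in
`s = r^2` has exactly three real roots, all positive. -/
theorem g_six_real_roots :
    (C (13 : ℝ) * X ^ 10 - C 117 * X ^ 8 + C 146 * X ^ 6 - C 202 * X ^ 4 +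
        C 33 * X ^ 2 - C 1).roots.toFinset.card = 6 ∧
    (∀ x : ℝ, (C (13 : ℝ) * X ^ 10 - C 117 * X ^ 8 + C 146 * X ^ 6 - C 202 * X ^ 4 +
        C 33 * X ^ 2 - C 1).IsRoot x ↔
      (C (13 : ℝ) * X ^ 10 - C 117 * X ^ 8 + C 146 * X ^ 6 - C 202 * X ^ 4 +
        C 33 * X ^ 2 - C 1).IsRoot (-x)) ∧
    (C (13 : ℝ) * X ^ 5 - C 117 * X ^ 4 + C 146 * X ^ 3 - C 202 * X ^ 2 +
        C 33 * X - C 1).roots.toFinset.card = 3 ∧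
    ∀ x : ℝ, (C (13 : ℝ) * X ^ 5 - C 117 * X ^ 4 + C 146 * X ^ 3 - C 202 * X ^ 2 +
        C 33 * X - C 1).IsRoot x → 0 < x := by
  have hg : C (13 : ℝ) * X ^ 10 - C 117 * X ^ 8 + C 146 * X ^ 6 - C 202 * X ^ 4 +
      C 33 * X ^ 2 - C 1 = vortexQuintic.comp (X ^ 2) := by
    simp only [vortexQuintic, sub_comp, add_comp, mul_comp, C_comp, X_pow_comp, X_comp]
    ring
  have hq : vortexQuintic.roots.toFinset.card = 3 :=
    card_roots_vortexQuintic_le.antisymm three_le_card_roots_vortexQuintic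
  rw [hg]
  refine ⟨?_, fun x => (isRoot_comp_X_sq_neg_iff _ x).symm, hq,
    fun _ => pos_of_isRoot_vortexQuintic⟩
  rw [card_roots_toFinset_comp_X_sq vortexQuintic_ne_zero fun _ => pos_of_isRoot_vortexQuintic, hq]
end
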